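/- arXiv:1802.03815 — 10 statements merged into one kernel-verified Lean document; each statement's English description precedes it below -/
import Mathlib

section
/- If a monotone Boolean function f on finitely many variables is computed by a read-once monotone formula, then every minterm S of f and every maxterm T of f intersect in exactly one point. -/
/-- Monotone Boolean formulas over a variable type `V`, built from variables with ∧ and ∨. -/
inductive MonFormula (V : Type) : Type
  | var : V → MonFormula V
  | conj : MonFormula V → MonFormula V → MonFormula V
  | disj : MonFormula V → MonFormula V → MonFormula V

namespace MonFormula

def eval {V : Type} : MonFormula V → (V → Bool) → Bool
  | var v, a => a v
  | conj φ ψ, a => eval φ a && eval ψ a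
  | disj φ ψ, a => eval φ a || eval ψ a

/-- Number of occurrences of the variable `v` in the formula. -/
def occs {V : Type} [DecidableEq V] : MonFormula V → V → ℕ
  | var u, v => if u = v then 1 else 0
  | conj φ ψ, v => occs φ v + occs ψ v
  | disj φ ψ, v => occs φ v + occs ψ v

/-- A formula is read-once if every variable occurs at most once in it. -/
def ReadOnce {V : Type} [DecidableEq V] (φ : MonFormula V) : Prop :=
  ∀ v, φ.occs v ≤ 1

end MonFormula

/-- A Boolean function is read-once if some read-once monotone formula computes it. -/
def ReadOnceFun {V : Type} [DecidableEq V] (f : (V → Bool) → Bool) : Prop :=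
  ∃ φ : MonFormula V, φ.ReadOnce ∧ ∀ a, φ.eval a = f a

/-- The assignment setting variables in `S` to 1 and all others to 0. -/
def setTo1 {V : Type} [DecidableEq V] (S : Finset V) : V → Bool :=
  fun v => decide (v ∈ S)

/-- The assignment setting variables in `T` to 0 and all others to 1. -/
def setTo0 {V : Type} [DecidableEq V] (T : Finset V) : V → Bool :=
  fun v => decide (v ∉ T)

/-- `S` is a minterm of `f`: `f(S→1) = 1` but `f(S'→1) = 0` for every proper subset. -/
def IsMinterm {V : Type} [DecidableEq V] (f : (V → Bool) → Bool) (S : Finset V) : Prop :=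
  f (setTo1 S) = true ∧ ∀ S' ⊂ S, f (setTo1 S') = false

/-- `T` is a maxterm of `f`: `f(T→0) = 0` but `f(T'→0) = 1` for every proper subset. -/
def IsMaxterm {V : Type} [DecidableEq V] (f : (V → Bool) → Bool) (T : Finset V) : Prop :=
  f (setTo0 T) = false ∧ ∀ T' ⊂ T, f (setTo0 T') = true

section Aux

variable {V : Type} [DecidableEq V]

lemma isMinterm_congr {f g : (V → Bool) → Bool} (h : ∀ a, f a = g a) {S : Finset V}
    (hS : IsMinterm f S) : IsMinterm g S :=
  ⟨(h _) ▸ hS.1, fun S' h' => (h _) ▸ hS.2 S' h'⟩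

lemma isMaxterm_congr {f g : (V → Bool) → Bool} (h : ∀ a, f a = g a) {T : Finset V}
    (hT : IsMaxterm f T) : IsMaxterm g T :=
  ⟨(h _) ▸ hT.1, fun T' h' => (h _) ▸ hT.2 T' h'⟩

namespace MonFormula

def vars : MonFormula V → Finset V
  | var v => {v}
  | conj φ ψ => vars φ ∪ vars ψ
  | disj φ ψ => vars φ ∪ vars ψ

lemma mem_vars (φ : MonFormula V) (v : V) : v ∈ φ.vars ↔ 0 < φ.occs v := by
  induction φ with
  | var u =>
      simp only [vars, occs, Finset.mem_singleton]
      split <;> rename_i h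
      · simp [h]
      · exact iff_of_false (fun hvu => h hvu.symm) (by omega)
  | conj φ ψ ihφ ihψ => simp only [vars, occs, Finset.mem_union, ihφ, ihψ]; omega
  | disj φ ψ ihφ ihψ => simp only [vars, occs, Finset.mem_union, ihφ, ihψ]; omega

set_option linter.unusedSectionVars false

lemma eval_congr (φ : MonFormula V) {a b : V → Bool} (h : ∀ v ∈ φ.vars, a v = b v) :
    eval φ a = eval φ b := by
  induction φ with
  | var u => exact h u (by simp [vars])
  | conj φ ψ ihφ ihψ =>
      simp only [eval]
      rw [ihφ (fun v hv => h v (by simp [vars, hv])),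
          ihψ (fun v hv => h v (by simp [vars, hv]))]
  | disj φ ψ ihφ ihψ =>
      simp only [eval]
      rw [ihφ (fun v hv => h v (by simp [vars, hv])),
          ihψ (fun v hv => h v (by simp [vars, hv]))]

lemma eval_allTrue (φ : MonFormula V) {a : V → Bool} (h : ∀ v, a v = true) :
    eval φ a = true := by
  induction φ with
  | var u => exact h u
  | conj φ ψ ihφ ihψ => simp [eval, ihφ, ihψ]
  | disj φ ψ ihφ ihψ => simp [eval, ihφ, ihψ]

lemma eval_allFalse (φ : MonFormula V) {a : V → Bool} (h : ∀ v, a v = false) :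
    eval φ a = false := by
  induction φ with
  | var u => exact h u
  | conj φ ψ ihφ ihψ => simp [eval, ihφ, ihψ]
  | disj φ ψ ihφ ihψ => simp [eval, ihφ, ihψ]

lemma minterm_subset_vars (φ : MonFormula V) {S : Finset V}
    (hS : IsMinterm φ.eval S) : S ⊆ φ.vars := by
  intro v hv
  by_contra hnv
  have h1 : eval φ (setTo1 (S.erase v)) = eval φ (setTo1 S) := by
    apply eval_congr
    intro u hu
    have : u ≠ v := fun h => hnv (h ▸ hu)
    simp [setTo1, this]
  rw [hS.2 (S.erase v) (Finset.erase_ssubset hv), hS.1] at h1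
  exact Bool.false_ne_true h1

lemma maxterm_subset_vars (φ : MonFormula V) {T : Finset V}
    (hT : IsMaxterm φ.eval T) : T ⊆ φ.vars := by
  intro v hv
  by_contra hnv
  have h1 : eval φ (setTo0 (T.erase v)) = eval φ (setTo0 T) := by
    apply eval_congr
    intro u hu
    have : u ≠ v := fun h => hnv (h ▸ hu)
    simp [setTo0, this]
  rw [hT.2 (T.erase v) (Finset.erase_ssubset hv), hT.1] at h1
  simp at h1

/-- In a conjunction with disjoint variable sets, a minterm restricts to a minterm of the left. -/
lemma minterm_conj_left {φ ψ : MonFormula V} (hdisj : ∀ v ∈ φ.vars, v ∉ ψ.vars)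
    {S : Finset V} (hS : IsMinterm (conj φ ψ).eval S) : IsMinterm φ.eval (S ∩ φ.vars) := by
  have hevS : eval φ (setTo1 S) = true ∧ eval ψ (setTo1 S) = true := by
    have := hS.1
    simp only [eval, Bool.and_eq_true] at this
    exact this
  have hagree1 : ∀ (X : Finset V), eval φ (setTo1 (X ∩ φ.vars)) = eval φ (setTo1 X) := by
    intro X
    apply eval_congr
    intro v hv
    simp [setTo1, hv]
  have hagree2 : ∀ (X : Finset V), eval ψ (setTo1 (X ∩ ψ.vars)) = eval ψ (setTo1 X) := by
    intro X
    apply eval_congr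
    intro v hv
    simp [setTo1, hv]
  constructor
  · rw [hagree1]; exact hevS.1
  · intro S' hS'
    have hsub : S' ∪ (S ∩ ψ.vars) ⊂ S := by
      constructor
      · intro v hv
        rcases Finset.mem_union.mp hv with h | h
        · exact (Finset.mem_inter.mp (hS'.1 h)).1
        · exact (Finset.mem_inter.mp h).1
      · intro hcon
        obtain ⟨v, hvS₁, hvS'⟩ := Finset.exists_of_ssubset hS'
        have hvS : v ∈ S := (Finset.mem_inter.mp hvS₁).1
        rcases Finset.mem_union.mp (hcon hvS) with h | h
        · exact hvS' h
        · exact hdisj v (Finset.mem_inter.mp hvS₁).2 (Finset.mem_inter.mp h).2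
    have h0 := hS.2 _ hsub
    simp only [eval, Bool.and_eq_false_iff] at h0
    have hψtrue : eval ψ (setTo1 (S' ∪ (S ∩ ψ.vars))) = true := by
      rw [← hagree2]
      have hXint : (S' ∪ (S ∩ ψ.vars)) ∩ ψ.vars = S ∩ ψ.vars := by
        ext v
        simp only [Finset.mem_inter, Finset.mem_union]
        constructor
        · rintro ⟨hv1 | hv1, hv2⟩
          · exact absurd hv2 (hdisj v (Finset.mem_inter.mp (hS'.1 hv1)).2)
          · exact hv1
        · intro hv
          exact ⟨Or.inr hv, hv.2⟩
      rw [hXint, hagree2]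
      exact hevS.2
    have hφfalse : eval φ (setTo1 (S' ∪ (S ∩ ψ.vars))) = false := by
      rcases h0 with h | h
      · exact h
      · rw [hψtrue] at h; exact absurd h (by simp)
    rw [← hφfalse]
    apply eval_congr
    intro v hv
    have h2 : v ∉ S ∩ ψ.vars := fun h => hdisj v hv (Finset.mem_inter.mp h).2
    simp [setTo1, h2]

/-- In a conjunction with disjoint variable sets, a maxterm whose left evaluation is false
is entirely a maxterm of the left conjunct. -/
lemma maxterm_conj_left {φ ψ : MonFormula V} (hdisj : ∀ v ∈ φ.vars, v ∉ ψ.vars)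
    {T : Finset V} (hT : IsMaxterm (conj φ ψ).eval T)
    (hf : eval φ (setTo0 T) = false) : T ⊆ φ.vars ∧ IsMaxterm φ.eval T := by
  have hTeq : T ∩ φ.vars = T := by
    by_contra hne
    have hss : T ∩ φ.vars ⊂ T :=
      lt_of_le_of_ne (Finset.inter_subset_left) hne
    have h1 := hT.2 _ hss
    have hφ : eval φ (setTo0 (T ∩ φ.vars)) = false := by
      rw [← hf]
      apply eval_congr
      intro v hv
      simp [setTo0, hv]
    have hψ : eval ψ (setTo0 (T ∩ φ.vars)) = true := by
      have : eval ψ (setTo0 (T ∩ φ.vars)) = eval ψ (setTo0 (∅ : Finset V)) := by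
        apply eval_congr
        intro v hv
        have : v ∉ T ∩ φ.vars := fun h => hdisj v (Finset.mem_inter.mp h).2 hv
        simp [setTo0, this]
      rw [this]
      exact eval_allTrue _ (by simp [setTo0])
    have : eval (conj φ ψ) (setTo0 (T ∩ φ.vars)) = false := by
      simp [eval, hφ, hψ]
    rw [h1] at this
    exact absurd this (by simp)
  refine ⟨by rw [← hTeq]; exact Finset.inter_subset_right, hf, ?_⟩
  intro T' hT'
  have := hT.2 T' hT'
  simp only [eval, Bool.and_eq_true] at this
  exact this.1

/-- Dual: in a disjunction with disjoint variable sets, a maxterm restricts to a maxterm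
of the left disjunct. -/
lemma maxterm_disj_left {φ ψ : MonFormula V} (hdisj : ∀ v ∈ φ.vars, v ∉ ψ.vars)
    {T : Finset V} (hT : IsMaxterm (disj φ ψ).eval T) : IsMaxterm φ.eval (T ∩ φ.vars) := by
  have hevT : eval φ (setTo0 T) = false ∧ eval ψ (setTo0 T) = false := by
    have := hT.1
    simp only [eval, Bool.or_eq_false_iff] at this
    exact this
  have hagree1 : ∀ (X : Finset V), eval φ (setTo0 (X ∩ φ.vars)) = eval φ (setTo0 X) := by
    intro X
    apply eval_congr
    intro v hv
    simp [setTo0, hv]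
  have hagree2 : ∀ (X : Finset V), eval ψ (setTo0 (X ∩ ψ.vars)) = eval ψ (setTo0 X) := by
    intro X
    apply eval_congr
    intro v hv
    simp [setTo0, hv]
  constructor
  · rw [hagree1]; exact hevT.1
  · intro T' hT'
    have hsub : T' ∪ (T ∩ ψ.vars) ⊂ T := by
      constructor
      · intro v hv
        rcases Finset.mem_union.mp hv with h | h
        · exact (Finset.mem_inter.mp (hT'.1 h)).1
        · exact (Finset.mem_inter.mp h).1
      · intro hcon
        obtain ⟨v, hvT₁, hvT'⟩ := Finset.exists_of_ssubset hT'
        have hvT : v ∈ T := (Finset.mem_inter.mp hvT₁).1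
        rcases Finset.mem_union.mp (hcon hvT) with h | h
        · exact hvT' h
        · exact hdisj v (Finset.mem_inter.mp hvT₁).2 (Finset.mem_inter.mp h).2
    have h0 := hT.2 _ hsub
    simp only [eval, Bool.or_eq_true] at h0
    have hψfalse : eval ψ (setTo0 (T' ∪ (T ∩ ψ.vars))) = false := by
      rw [← hagree2]
      have hXint : (T' ∪ (T ∩ ψ.vars)) ∩ ψ.vars = T ∩ ψ.vars := by
        ext v
        simp only [Finset.mem_inter, Finset.mem_union]
        constructor
        · rintro ⟨hv1 | hv1, hv2⟩
          · exact absurd hv2 (hdisj v (Finset.mem_inter.mp (hT'.1 hv1)).2)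
          · exact hv1
        · intro hv
          exact ⟨Or.inr hv, hv.2⟩
      rw [hXint, hagree2]
      exact hevT.2
    have hφtrue : eval φ (setTo0 (T' ∪ (T ∩ ψ.vars))) = true := by
      rcases h0 with h | h
      · exact h
      · rw [hψfalse] at h; exact absurd h (by simp)
    rw [← hφtrue]
    apply eval_congr
    intro v hv
    have h2 : v ∉ T ∩ ψ.vars := fun h => hdisj v hv (Finset.mem_inter.mp h).2
    simp [setTo0, h2]

/-- Dual: in a disjunction with disjoint variable sets, a minterm whose left evaluation is true
is entirely a minterm of the left disjunct. -/
lemma minterm_disj_left {φ ψ : MonFormula V} (hdisj : ∀ v ∈ φ.vars, v ∉ ψ.vars)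
    {S : Finset V} (hS : IsMinterm (disj φ ψ).eval S)
    (hf : eval φ (setTo1 S) = true) : S ⊆ φ.vars ∧ IsMinterm φ.eval S := by
  have hSeq : S ∩ φ.vars = S := by
    by_contra hne
    have hss : S ∩ φ.vars ⊂ S :=
      lt_of_le_of_ne (Finset.inter_subset_left) hne
    have h1 := hS.2 _ hss
    have hφ : eval φ (setTo1 (S ∩ φ.vars)) = true := by
      rw [← hf]
      apply eval_congr
      intro v hv
      simp [setTo1, hv]
    have : eval (disj φ ψ) (setTo1 (S ∩ φ.vars)) = true := by
      simp [eval, hφ]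
    rw [h1] at this
    exact absurd this (by simp)
  refine ⟨by rw [← hSeq]; exact Finset.inter_subset_right, hf, ?_⟩
  intro S' hS'
  have := hS.2 S' hS'
  simp only [eval, Bool.or_eq_false_iff] at this
  exact this.1

lemma conj_comm_eval (φ ψ : MonFormula V) (a : V → Bool) :
    (conj φ ψ).eval a = (conj ψ φ).eval a := by
  simp [eval, Bool.and_comm]

lemma disj_comm_eval (φ ψ : MonFormula V) (a : V → Bool) :
    (disj φ ψ).eval a = (disj ψ φ).eval a := by
  simp [eval, Bool.or_comm]

lemma gurvich (φ : MonFormula V) : φ.ReadOnce → ∀ S T : Finset V,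
    IsMinterm φ.eval S → IsMaxterm φ.eval T → (S ∩ T).card = 1 := by
  induction φ with
  | var u =>
    intro _ S T hS hT
    have hSu : S = {u} := by
      have hu : u ∈ S := by
        have := hS.1
        simpa [eval, setTo1] using this
      refine le_antisymm ?_ (Finset.singleton_subset_iff.mpr hu)
      intro v hv
      by_contra hne
      simp only [Finset.mem_singleton] at hne
      have hlt : ({u} : Finset V) ⊂ S :=
        (Finset.ssubset_iff_of_subset (Finset.singleton_subset_iff.mpr hu)).mpr
          ⟨v, hv, by simp [hne]⟩
      have := hS.2 {u} hlt
      simp [eval, setTo1] at this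
    have hTu : T = {u} := by
      have hu : u ∈ T := by
        have := hT.1
        simp only [eval, setTo0, decide_eq_false_iff_not, not_not] at this
        exact this
      refine le_antisymm ?_ (Finset.singleton_subset_iff.mpr hu)
      intro v hv
      by_contra hne
      simp only [Finset.mem_singleton] at hne
      have hlt : ({u} : Finset V) ⊂ T :=
        (Finset.ssubset_iff_of_subset (Finset.singleton_subset_iff.mpr hu)).mpr
          ⟨v, hv, by simp [hne]⟩
      have := hT.2 {u} hlt
      simp [eval, setTo0] at this
    simp [hSu, hTu]
  | conj φ ψ ihφ ihψ =>
    intro hro S T hS hT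
    have hroφ : φ.ReadOnce := fun v => le_trans (Nat.le_add_right _ _) (hro v)
    have hroψ : ψ.ReadOnce := fun v => le_trans (Nat.le_add_left _ _) (hro v)
    have hdisj : ∀ v ∈ φ.vars, v ∉ ψ.vars := by
      intro v h1 h2
      rw [mem_vars] at h1 h2
      have := hro v
      simp only [occs] at this
      omega
    have hdisj' : ∀ v ∈ ψ.vars, v ∉ φ.vars := fun v h2 h1 => hdisj v h1 h2
    have hevT : eval φ (setTo0 T) = false ∨ eval ψ (setTo0 T) = false := by
      have := hT.1
      simp only [eval, Bool.and_eq_false_iff] at this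
      exact this
    rcases hevT with hf | hf
    · obtain ⟨hTsub, hTφ⟩ := maxterm_conj_left hdisj hT hf
      have hSφ := minterm_conj_left hdisj hS
      have hST : S ∩ T = (S ∩ φ.vars) ∩ T := by
        ext v
        simp only [Finset.mem_inter]
        exact ⟨fun ⟨h1, h2⟩ => ⟨⟨h1, hTsub h2⟩, h2⟩, fun ⟨⟨h1, _⟩, h2⟩ => ⟨h1, h2⟩⟩
      rw [hST]
      exact ihφ hroφ _ _ hSφ hTφ
    · obtain ⟨hTsub, hTψ⟩ := maxterm_conj_left hdisj'
        (isMaxterm_congr (conj_comm_eval φ ψ) hT) hf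
      have hSψ := minterm_conj_left hdisj' (isMinterm_congr (conj_comm_eval φ ψ) hS)
      have hST : S ∩ T = (S ∩ ψ.vars) ∩ T := by
        ext v
        simp only [Finset.mem_inter]
        exact ⟨fun ⟨h1, h2⟩ => ⟨⟨h1, hTsub h2⟩, h2⟩, fun ⟨⟨h1, _⟩, h2⟩ => ⟨h1, h2⟩⟩
      rw [hST]
      exact ihψ hroψ _ _ hSψ hTψ
  | disj φ ψ ihφ ihψ =>
    intro hro S T hS hT
    have hroφ : φ.ReadOnce := fun v => le_trans (Nat.le_add_right _ _) (hro v)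
    have hroψ : ψ.ReadOnce := fun v => le_trans (Nat.le_add_left _ _) (hro v)
    have hdisj : ∀ v ∈ φ.vars, v ∉ ψ.vars := by
      intro v h1 h2
      rw [mem_vars] at h1 h2
      have := hro v
      simp only [occs] at this
      omega
    have hdisj' : ∀ v ∈ ψ.vars, v ∉ φ.vars := fun v h2 h1 => hdisj v h1 h2
    have hevS : eval φ (setTo1 S) = true ∨ eval ψ (setTo1 S) = true := by
      have := hS.1
      simpa [eval, Bool.or_eq_true] using this
    rcases hevS with hf | hf
    · obtain ⟨hSsub, hSφ⟩ := minterm_disj_left hdisj hS hf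
      have hTφ := maxterm_disj_left hdisj hT
      have hST : S ∩ T = S ∩ (T ∩ φ.vars) := by
        ext v
        simp only [Finset.mem_inter]
        exact ⟨fun ⟨h1, h2⟩ => ⟨h1, h2, hSsub h1⟩, fun ⟨h1, h2, _⟩ => ⟨h1, h2⟩⟩
      rw [hST]
      exact ihφ hroφ _ _ hSφ hTφ
    · obtain ⟨hSsub, hSψ⟩ := minterm_disj_left hdisj'
        (isMinterm_congr (disj_comm_eval φ ψ) hS) hf
      have hTψ := maxterm_disj_left hdisj' (isMaxterm_congr (disj_comm_eval φ ψ) hT)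
      have hST : S ∩ T = S ∩ (T ∩ ψ.vars) := by
        ext v
        simp only [Finset.mem_inter]
        exact ⟨fun ⟨h1, h2⟩ => ⟨h1, h2, hSsub h1⟩, fun ⟨h1, h2, _⟩ => ⟨h1, h2⟩⟩
      rw [hST]
      exact ihψ hroψ _ _ hSψ hTψ

end MonFormula

end Aux

/-- Gurvich's criterion, necessity: if a monotone function `f` on finitely many
variables is computed by a read-once monotone formula, then every minterm and
every maxterm of `f` intersect in exactly one point. -/
theorem stmt_2 {V : Type} [Fintype V] [DecidableEq V] (f : (V → Bool) → Bool)
    (φ : MonFormula V) (hro : φ.ReadOnce) (hcomp : ∀ a, φ.eval a = f a)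
    (S T : Finset V) (hS : IsMinterm f S) (hT : IsMaxterm f T) :
    (S ∩ T).card = 1 := by
  have hcomp' : ∀ a, f a = φ.eval a := fun a => (hcomp a).symm
  exact MonFormula.gurvich φ hro S T (isMinterm_congr hcomp' hS) (isMaxterm_congr hcomp' hT)
end

section
/- Let C = C_1 ∧ ... ∧ C_m be a read-once monotone CNF (the clauses C_i are pairwise disjoint nonempty subsets of the variable set {x_1,...,x_n}) and D = D_1 ∨ ... ∨ D_l a read-once monotone DNF (the conjunctions D_j are pairwise disjoint nonempty subsets whose union is {x_1,...,x_n}). Call S ⊆ {x_1,...,x_n} a right set if S = D_j for some j, and a left set if S ⊆ C_1 ∪ ... ∪ C_m and |S ∩ C_i| = 1 for every i. Then a set S is a minterm of the function C ∨ D if and only if (S is a left set that does not properly include any right set) or (S is a right set that does not properly include any left set). -/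
/-- Evaluation of the monotone CNF with clauses `C i` (each clause a set of variables). -/
def cnfEval {V : Type} {m : ℕ} (C : Fin m → Finset V) (a : V → Bool) : Bool :=
  decide (∀ i, ∃ v ∈ C i, a v = true)

/-- Evaluation of the monotone DNF with conjunctions `D j`. -/
def dnfEval {V : Type} {l : ℕ} (D : Fin l → Finset V) (a : V → Bool) : Bool :=
  decide (∃ j, ∀ v ∈ D j, a v = true)

lemma cnf1 {V : Type} [DecidableEq V] {m : ℕ} (C : Fin m → Finset V) (S : Finset V) :
    cnfEval C (setTo1 S) = true ↔ ∀ i, ∃ v ∈ C i, v ∈ S := by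
  simp [cnfEval, setTo1]

lemma dnf1 {V : Type} [DecidableEq V] {l : ℕ} (D : Fin l → Finset V) (S : Finset V) :
    dnfEval D (setTo1 S) = true ↔ ∃ j, D j ⊆ S := by
  simp [dnfEval, setTo1, Finset.subset_iff]

lemma eval_false {V : Type} [DecidableEq V] {m l : ℕ} (C : Fin m → Finset V)
    (D : Fin l → Finset V) (S : Finset V) :
    ((cnfEval C (setTo1 S) || dnfEval D (setTo1 S)) = false) ↔
      (¬ ∀ i, ∃ v ∈ C i, v ∈ S) ∧ (¬ ∃ j, D j ⊆ S) := by
  simp only [Bool.or_eq_false_iff]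
  rw [← Bool.not_eq_true, ← Bool.not_eq_true, cnf1, dnf1]

/-- Description of the minterms of `C ∨ D`, where `C` is a read-once monotone CNF
(pairwise disjoint nonempty clauses) and `D` is a read-once monotone DNF
(pairwise disjoint nonempty conjunctions covering all variables):
`S` is a minterm iff `S` is a left set not properly including any right set,
or `S` is a right set not properly including any left set. -/
theorem stmt_4 {V : Type} [Fintype V] [DecidableEq V] {m l : ℕ}
    (C : Fin m → Finset V) (D : Fin l → Finset V)
    (hCdisj : ∀ i i', i ≠ i' → Disjoint (C i) (C i'))
    (hCne : ∀ i, (C i).Nonempty)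
    (hDdisj : ∀ j j', j ≠ j' → Disjoint (D j) (D j'))
    (hDne : ∀ j, (D j).Nonempty)
    (hDcover : Finset.univ.biUnion D = (Finset.univ : Finset V))
    (S : Finset V) :
    IsMinterm (fun a => cnfEval C a || dnfEval D a) S ↔
      ((S ⊆ Finset.univ.biUnion C ∧ ∀ i, (S ∩ C i).card = 1) ∧
          ∀ j, ¬ D j ⊂ S) ∨
      ((∃ j, S = D j) ∧
          ∀ L : Finset V,
            (L ⊆ Finset.univ.biUnion C ∧ ∀ i, (L ∩ C i).card = 1) → ¬ L ⊂ S) := by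
  constructor
  · rintro ⟨hf, hmin⟩
    simp only [Bool.or_eq_true, cnf1, dnf1] at hf
    have hmin' : ∀ S' ⊂ S, (¬ ∀ i, ∃ v ∈ C i, v ∈ S') ∧ (¬ ∃ j, D j ⊆ S') := by
      intro S' hS'
      have := hmin S' hS'
      rwa [eval_false] at this
    by_cases hD : ∃ j, D j ⊆ S
    · -- right case
      right
      obtain ⟨j, hj⟩ := hD
      have hSeq : S = D j := by
        by_contra hne
        have hss : D j ⊂ S := hj.ssubset_of_ne (Ne.symm hne)
        exact (hmin' (D j) hss).2 ⟨j, le_refl _⟩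
      refine ⟨⟨j, hSeq⟩, ?_⟩
      rintro L ⟨hLsub, hLcard⟩ hLS
      exact (hmin' L hLS).1 (fun i => by
        have h1 : (L ∩ C i).Nonempty := Finset.card_pos.mp (by rw [hLcard i]; norm_num)
        obtain ⟨v, hv⟩ := h1
        rw [Finset.mem_inter] at hv
        exact ⟨v, hv.2, hv.1⟩)
    · -- left case
      left
      have hcnf : ∀ i, ∃ v ∈ C i, v ∈ S := hf.resolve_right hD
      have hsub : S ⊆ Finset.univ.biUnion C := by
        intro v hv
        by_contra hvC
        simp only [Finset.mem_biUnion, Finset.mem_univ, true_and] at hvC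
        push_neg at hvC
        have hss : S.erase v ⊂ S := Finset.erase_ssubset hv
        rcases hmin' _ hss with ⟨h1, h2⟩
        apply h1
        intro i
        obtain ⟨w, hwC, hwS⟩ := hcnf i
        refine ⟨w, hwC, Finset.mem_erase.mpr ⟨?_, hwS⟩⟩
        rintro rfl; exact hvC i hwC
      have hcard : ∀ i, (S ∩ C i).card = 1 := by
        intro i
        obtain ⟨w, hwC, hwS⟩ := hcnf i
        rw [Finset.card_eq_one]
        refine ⟨w, ?_⟩
        ext v
        simp only [Finset.mem_inter, Finset.mem_singleton]
        constructor
        · rintro ⟨hvS, hvC⟩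
          by_contra hvw
          have hss : S.erase v ⊂ S := Finset.erase_ssubset hvS
          rcases hmin' _ hss with ⟨h1, h2⟩
          apply h1
          intro i'
          by_cases hii : i' = i
          · subst hii
            exact ⟨w, hwC, Finset.mem_erase.mpr ⟨fun h => hvw h.symm, hwS⟩⟩
          · obtain ⟨u, huC, huS⟩ := hcnf i'
            refine ⟨u, huC, Finset.mem_erase.mpr ⟨?_, huS⟩⟩
            rintro rfl
            exact (Finset.disjoint_left.mp (hCdisj i' i hii) huC) hvC
        · rintro rfl; exact ⟨hwS, hwC⟩
      refine ⟨⟨hsub, hcard⟩, ?_⟩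
      intro j hj
      exact (hmin' (D j) hj).2 ⟨j, le_refl _⟩
  · rintro (⟨⟨hsub, hcard⟩, hnoD⟩ | ⟨⟨j, rfl⟩, hnoL⟩)
    · constructor
      · simp only [Bool.or_eq_true, cnf1, dnf1]
        left
        intro i
        have h1 : (S ∩ C i).Nonempty := Finset.card_pos.mp (by rw [hcard i]; norm_num)
        obtain ⟨v, hv⟩ := h1
        rw [Finset.mem_inter] at hv
        exact ⟨v, hv.2, hv.1⟩
      · intro S' hS'
        rw [eval_false]
        constructor
        · intro hall
          obtain ⟨v, hvS, hvS'⟩ := Finset.exists_of_ssubset hS'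
          obtain ⟨i, hi⟩ : ∃ i, v ∈ C i := by
            have := hsub hvS
            simpa [Finset.mem_biUnion] using this
          obtain ⟨w, hwC, hwS'⟩ := hall i
          have hwS : w ∈ S := hS'.subset hwS'
          have hv' : v ∈ S ∩ C i := Finset.mem_inter.mpr ⟨hvS, hi⟩
          have hw' : w ∈ S ∩ C i := Finset.mem_inter.mpr ⟨hwS, hwC⟩
          obtain ⟨u, hu⟩ := Finset.card_eq_one.mp (hcard i)
          rw [hu, Finset.mem_singleton] at hv' hw'
          exact hvS' (hv' ▸ hw' ▸ hwS')
        · rintro ⟨j, hj⟩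
          exact hnoD j (lt_of_le_of_lt hj hS')
    · constructor
      · simp only [Bool.or_eq_true, cnf1, dnf1]
        right
        exact ⟨j, le_refl _⟩
      · intro S' hS'
        rw [eval_false]
        constructor
        · intro hall
          choose g hg1 hg2 using hall
          set L : Finset V := Finset.univ.image g with hL
          have hLsub : L ⊆ Finset.univ.biUnion C := by
            intro v hv
            simp only [hL, Finset.mem_image, Finset.mem_univ, true_and] at hv
            obtain ⟨i, rfl⟩ := hv
            exact Finset.mem_biUnion.mpr ⟨i, Finset.mem_univ i, hg1 i⟩
          have hLcard : ∀ i, (L ∩ C i).card = 1 := by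
            intro i
            rw [Finset.card_eq_one]
            refine ⟨g i, ?_⟩
            ext v
            simp only [Finset.mem_inter, Finset.mem_singleton, hL, Finset.mem_image,
              Finset.mem_univ, true_and]
            constructor
            · rintro ⟨⟨i', rfl⟩, hvC⟩
              by_cases hii : i' = i
              · subst hii; rfl
              · exact absurd hvC (Finset.disjoint_left.mp (hCdisj i' i hii) (hg1 i'))
            · rintro rfl; exact ⟨⟨i, rfl⟩, hg1 i⟩
          have hLS' : L ⊆ S' := by
            intro v hv
            simp only [hL, Finset.mem_image, Finset.mem_univ, true_and] at hv
            obtain ⟨i, rfl⟩ := hv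
            exact hg2 i
          exact hnoL L ⟨hLsub, hLcard⟩ (lt_of_le_of_lt hLS' hS')
        · rintro ⟨j', hj'⟩
          by_cases hjj : j' = j
          · subst hjj
            exact hS'.not_subset hj'
          · obtain ⟨v, hv⟩ := hDne j'
            have hvj : v ∈ D j := hS'.subset (hj' hv)
            exact (Finset.disjoint_left.mp (hDdisj j' j hjj) hv) hvj
end

section
/- Let C = C_1 ∧ ... ∧ C_m be a read-once monotone CNF and D = D_1 ∨ ... ∨ D_l a read-once monotone DNF over variables {x_1,...,x_n}, where D_1 ∪ ... ∪ D_l = {x_1,...,x_n}. For two distinct clauses C_u, C_v of C, there exists a maxterm T of the function C ∨ D with C_u ⊆ T and C_v ⊆ T if and only if |(C_u ∪ C_v) ∩ D_j| ≤ 1 for every j ∈ {1,...,l}. -/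
lemma evalFalse_iff {V : Type} [DecidableEq V] {m l : ℕ}
    (C : Fin m → Finset V) (D : Fin l → Finset V) (T : Finset V) :
    (cnfEval C (setTo0 T) || dnfEval D (setTo0 T)) = false ↔
      (∃ i, C i ⊆ T) ∧ ∀ j, (T ∩ D j).Nonempty := by
  simp only [cnfEval, dnfEval, setTo0, Bool.or_eq_false_iff, decide_eq_false_iff_not,
    decide_eq_true_eq]
  push_neg
  constructor
  · rintro ⟨⟨i, hi⟩, h2⟩
    refine ⟨⟨i, fun x hx => ?_⟩, fun j => ?_⟩
    · by_contra hxT; exact absurd hxT (by simpa using hi x hx)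
    · obtain ⟨y, hy, hyT⟩ := h2 j
      exact ⟨y, Finset.mem_inter.2 ⟨by simpa using hyT, hy⟩⟩
  · rintro ⟨⟨i, hi⟩, h2⟩
    refine ⟨⟨i, fun x hx => by simpa using hi hx⟩, fun j => ?_⟩
    obtain ⟨y, hy⟩ := h2 j
    rw [Finset.mem_inter] at hy
    exact ⟨y, hy.2, by simpa using hy.1⟩

/-- For distinct clauses `C u, C v` of a read-once monotone CNF `C`, there is a
maxterm `T` of `C ∨ D` containing both `C u` and `C v` iff
`|(C u ∪ C v) ∩ D j| ≤ 1` for every conjunction `D j` of the read-once DNF `D`. -/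
theorem stmt_5 {V : Type} [Fintype V] [DecidableEq V] {m l : ℕ}
    (C : Fin m → Finset V) (D : Fin l → Finset V)
    (hCdisj : ∀ i i', i ≠ i' → Disjoint (C i) (C i'))
    (hCne : ∀ i, (C i).Nonempty)
    (hDdisj : ∀ j j', j ≠ j' → Disjoint (D j) (D j'))
    (hDne : ∀ j, (D j).Nonempty)
    (hDcover : Finset.univ.biUnion D = (Finset.univ : Finset V))
    (u v : Fin m) (huv : u ≠ v) :
    (∃ T : Finset V,
        IsMaxterm (fun a => cnfEval C a || dnfEval D a) T ∧ C u ⊆ T ∧ C v ⊆ T) ↔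
      ∀ j, ((C u ∪ C v) ∩ D j).card ≤ 1 := by
  classical
  -- every x ∈ V lies in some D j
  have hcov : ∀ x : V, ∃ j, x ∈ D j := by
    intro x
    have : x ∈ Finset.univ.biUnion D := by rw [hDcover]; exact Finset.mem_univ x
    simpa using this
  constructor
  · rintro ⟨T, ⟨hT0, hTmin⟩, hu, hv⟩
    rw [evalFalse_iff] at hT0
    -- each element of C u ∪ C v is the unique element of T in some D j
    have key : ∀ x ∈ C u ∪ C v, ∃ j, T ∩ D j = {x} := by
      intro x hx
      have hxT : x ∈ T := by
        rcases Finset.mem_union.1 hx with h | h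
        · exact hu h
        · exact hv h
      have hsub : T.erase x ⊂ T := Finset.erase_ssubset hxT
      have h1 : (cnfEval C (setTo0 (T.erase x)) || dnfEval D (setTo0 (T.erase x))) = true :=
        hTmin _ hsub
      -- C u or C v still ⊆ T.erase x, so cnf part is false; hence dnf part is true
      have hcnf : cnfEval C (setTo0 (T.erase x)) = false := by
        simp only [cnfEval, decide_eq_false_iff_not, setTo0, decide_eq_true_eq]
        push_neg
        rcases Finset.mem_union.1 hx with h | h
        · refine ⟨v, fun y hy => ?_⟩
          have hne : y ≠ x := fun e => (Finset.disjoint_left.1 (hCdisj v u huv.symm) hy) (e ▸ h)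
          simpa using Finset.mem_erase.2 ⟨hne, hv hy⟩
        · refine ⟨u, fun y hy => ?_⟩
          have hne : y ≠ x := fun e => (Finset.disjoint_left.1 (hCdisj u v huv) hy) (e ▸ h)
          simpa using Finset.mem_erase.2 ⟨hne, hu hy⟩
      rw [hcnf, Bool.false_or] at h1
      simp only [dnfEval, decide_eq_true_eq, setTo0] at h1
      obtain ⟨j, hj⟩ := h1
      refine ⟨j, Finset.Subset.antisymm ?_ ?_⟩
      · intro y hy
        rw [Finset.mem_inter] at hy
        have := hj y hy.2
        simp only [decide_eq_true_eq, Finset.mem_erase] at this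
        rw [Finset.mem_singleton]
        by_contra hne
        exact this ⟨hne, hy.1⟩
      · intro y hy
        rw [Finset.mem_singleton] at hy
        rw [hy]
        refine Finset.mem_inter.2 ⟨hxT, ?_⟩
        obtain ⟨z, hz⟩ := (hT0.2 j)
        rw [Finset.mem_inter] at hz
        -- z ∈ T ∩ D j ; if z ≠ x then z ∈ T.erase x contradicting hj
        by_contra hxDj
        have hzx : z ≠ x := fun e => hxDj (e ▸ hz.2)
        have := hj z hz.2
        simp only [decide_eq_true_eq, Finset.mem_erase] at this
        exact this ⟨hzx, hz.1⟩
    intro j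
    rw [Finset.card_le_one]
    intro a ha b hb
    rw [Finset.mem_inter] at ha hb
    obtain ⟨ja, hja⟩ := key a ha.1
    obtain ⟨jb, hjb⟩ := key b hb.1
    have haT : a ∈ T := by
      have : a ∈ ({a} : Finset V) := Finset.mem_singleton_self a
      rw [← hja] at this; exact (Finset.mem_inter.1 this).1
    have haja : a ∈ D ja := by
      have : a ∈ ({a} : Finset V) := Finset.mem_singleton_self a
      rw [← hja] at this; exact (Finset.mem_inter.1 this).2
    have hja_eq : ja = j := by
      by_contra hne
      exact (Finset.disjoint_left.1 (hDdisj ja j hne) haja) ha.2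
    -- b ∈ T ∩ D j = T ∩ D ja = {a}
    have hbT : b ∈ T := by
      have : b ∈ ({b} : Finset V) := Finset.mem_singleton_self b
      rw [← hjb] at this; exact (Finset.mem_inter.1 this).1
    have : b ∈ T ∩ D ja := Finset.mem_inter.2 ⟨hbT, hja_eq ▸ hb.2⟩
    rw [hja] at this
    exact (Finset.mem_singleton.1 this) ▸ rfl
  · intro h
    -- construction
    set A := C u ∪ C v with hA
    choose pick hpick using hDne
    set J := Finset.univ.filter (fun j => (A ∩ D j) = ∅) with hJ
    set T := A ∪ J.image pick with hT
    have hAT : A ⊆ T := Finset.subset_union_left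
    -- T hits every D j
    have hhits : ∀ j, (T ∩ D j).Nonempty := by
      intro j
      by_cases hj : (A ∩ D j) = ∅
      · have hjJ : j ∈ J := by simp [hJ, hj]
        exact ⟨pick j, Finset.mem_inter.2
          ⟨Finset.mem_union_right _ (Finset.mem_image_of_mem pick hjJ), hpick j⟩⟩
      · obtain ⟨x, hx⟩ := Finset.nonempty_iff_ne_empty.2 hj
        rw [Finset.mem_inter] at hx
        exact ⟨x, Finset.mem_inter.2 ⟨hAT hx.1, hx.2⟩⟩
    -- every element of T is the unique element of T in some D j
    have hkey : ∀ x ∈ T, ∃ j, T ∩ D j = {x} := by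
      intro x hx
      rcases Finset.mem_union.1 hx with hxA | hxP
      · obtain ⟨j, hj⟩ := hcov x
        have hjJ : j ∉ J := by
          simp only [hJ, Finset.mem_filter, Finset.mem_univ, true_and]
          intro he
          have : x ∈ A ∩ D j := Finset.mem_inter.2 ⟨hxA, hj⟩
          simp [he] at this
        refine ⟨j, Finset.Subset.antisymm ?_ ?_⟩
        · intro y hy
          rw [Finset.mem_inter] at hy
          rcases Finset.mem_union.1 hy.1 with hyA | hyP
          · have := Finset.card_le_one.1 (h j) y (Finset.mem_inter.2 ⟨hyA, hy.2⟩)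
              x (Finset.mem_inter.2 ⟨hxA, hj⟩)
            simp [this]
          · obtain ⟨j', hj'J, hj'e⟩ := Finset.mem_image.1 hyP
            have hyDj' : y ∈ D j' := hj'e ▸ hpick j'
            have : j' = j := by
              by_contra hne
              exact (Finset.disjoint_left.1 (hDdisj j' j hne) hyDj') hy.2
            exact absurd (this ▸ hj'J) hjJ
        · intro y hy
          rw [Finset.mem_singleton] at hy
          exact hy ▸ Finset.mem_inter.2 ⟨hx, hj⟩
      · obtain ⟨j', hj'J, hj'e⟩ := Finset.mem_image.1 hxP
        have hxDj' : x ∈ D j' := hj'e ▸ hpick j'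
        refine ⟨j', Finset.Subset.antisymm ?_ ?_⟩
        · intro y hy
          rw [Finset.mem_inter] at hy
          rcases Finset.mem_union.1 hy.1 with hyA | hyP
          · have : y ∈ A ∩ D j' := Finset.mem_inter.2 ⟨hyA, hy.2⟩
            have he : A ∩ D j' = ∅ := by
              simpa [hJ, Finset.mem_filter] using hj'J
            simp [he] at this
          · obtain ⟨j'', hj''J, hj''e⟩ := Finset.mem_image.1 hyP
            have hyDj'' : y ∈ D j'' := hj''e ▸ hpick j''
            have : j'' = j' := by
              by_contra hne
              exact (Finset.disjoint_left.1 (hDdisj j'' j' hne) hyDj'') hy.2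
            rw [Finset.mem_singleton, ← hj''e, this, hj'e]
        · intro y hy
          rw [Finset.mem_singleton] at hy
          exact hy ▸ Finset.mem_inter.2 ⟨hx, hxDj'⟩
    refine ⟨T, ⟨?_, ?_⟩, fun x hx => hAT (Finset.mem_union_left _ hx),
      fun x hx => hAT (Finset.mem_union_right _ hx)⟩
    · show (cnfEval C (setTo0 T) || dnfEval D (setTo0 T)) = false
      exact (evalFalse_iff C D T).2 ⟨⟨u, fun x hx => hAT (Finset.mem_union_left _ hx)⟩, hhits⟩
    · intro T' hT'
      obtain ⟨x, hxT, hxT'⟩ := Finset.exists_of_ssubset hT'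
      obtain ⟨j, hj⟩ := hkey x hxT
      have hdnf : dnfEval D (setTo0 T') = true := by
        simp only [dnfEval, decide_eq_true_eq, setTo0]
        refine ⟨j, fun y hy => ?_⟩
        intro hyT'
        have : y ∈ T ∩ D j := Finset.mem_inter.2 ⟨hT'.1 hyT', hy⟩
        rw [hj, Finset.mem_singleton] at this
        exact hxT' (this ▸ hyT')
      show (cnfEval C (setTo0 T') || dnfEval D (setTo0 T')) = true
      rw [hdnf, Bool.or_true]
end

section
/- Let G = (V, E) be a finite simple undirected graph and k ≥ 1. If w_1, ..., w_k ∈ V form a k-clique in G (i.e., {w_i, w_j} ∈ E for all i ≠ j), then the following strategy wins for Alice and Bob in the Alice-Bob-Merlin game: Alice plays S_A(i) = w_i, and Bob, given a configuration {(i,u),(j,v)} ∈ CONF, outputs i if v ≠ w_j and outputs j if v = w_j (in which case u ≠ w_i). Formally: for every Merlin strategy (i, S_M^1, S_M^2) with S_M^1(u) ≠ i and {u, S_M^2(u)} ∉ E for all u, Bob's function applied to {(i, w_i), (S_M^1(w_i), S_M^2(w_i))} returns i. -/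
/-- If `w 1, …, w k` form a `k`-clique in `G`, the described strategy wins for
Alice and Bob: Alice writes `w i` when Merlin points to cell `i`, and Bob, on a
configuration `{(i,u),(j,v)}` with `u = w i`, outputs `i` if `v ≠ w j` and `j`
if `v = w j`. Then for every Merlin strategy, Bob answers correctly. -/
theorem stmt_12 {V : Type} [DecidableEq V] (G : SimpleGraph V) (k : ℕ)
    (w : Fin k → V) (hclique : ∀ i j, i ≠ j → G.Adj (w i) (w j))
    (SB : Sym2 (Fin k × V) → Fin k)
    (hBob : ∀ (i j : Fin k) (v : V), i ≠ j → ¬ G.Adj (w i) v →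
      SB s((i, w i), (j, v)) = if v = w j then j else i) :
    ∀ (i : Fin k) (SM1 : V → Fin k) (SM2 : V → V),
      (∀ u, SM1 u ≠ i) → (∀ u, ¬ G.Adj u (SM2 u)) →
      SB s((i, w i), (SM1 (w i), SM2 (w i))) = i := by
  intro i SM1 SM2 h1 h2
  set j := SM1 (w i)
  set v := SM2 (w i)
  have hij : i ≠ j := fun h => h1 (w i) h.symm
  have hna : ¬ G.Adj (w i) v := h2 (w i)
  rw [hBob i j v hij hna, if_neg]
  intro h
  exact hna (h ▸ hclique i j hij)
end

section
/- Let G = (V, E) be a finite simple graph without self-loops and k ≥ 2. If Alice and Bob have a winning strategy (S_A, S_B) in the Alice-Bob-Merlin game, then the vertices v_i = S_A(i), i = 1,...,k, form a k-clique in G: for all i ≠ j, {v_i, v_j} ∈ E. -/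
/-- If Alice and Bob have a winning strategy `(SA, SB)` in the Alice–Bob–Merlin
game on a simple graph `G` (no self-loops) with `k ≥ 2` cells, then the vertices
`SA 1, …, SA k` form a `k`-clique in `G`. -/
theorem stmt_13 {V : Type} [DecidableEq V] (G : SimpleGraph V) (k : ℕ) (hk : 2 ≤ k)
    (SA : Fin k → V) (SB : Sym2 (Fin k × V) → Fin k)
    (hwin : ∀ (i : Fin k) (SM1 : V → Fin k) (SM2 : V → V),
      (∀ u, SM1 u ≠ i) → (∀ u, ¬ G.Adj u (SM2 u)) →
      SB s((i, SA i), (SM1 (SA i), SM2 (SA i))) = i) :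
    ∀ i j, i ≠ j → G.Adj (SA i) (SA j) := by
  classical
  intro i j hij
  by_contra hadj
  have key : ∀ (a b : Fin k), a ≠ b → ¬ G.Adj (SA a) (SA b) →
      SB s((a, SA a), (b, SA b)) = a := by
    intro a b hab hnadj
    have h := hwin a (fun _ => b) (fun u => if G.Adj u (SA b) then u else SA b)
      (fun _ => hab.symm)
      (fun u => by
        by_cases h : G.Adj u (SA b)
        · simp [h, G.irrefl]
        · simp [h])
    simpa [hnadj] using h
  have h1 := key i j hij hadj
  have h2 := key j i hij.symm (fun h => hadj h.symm)
  rw [Sym2.eq_swap] at h2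
  exact hij (h1.symm.trans h2)
end

section
/- Let G = (V,E) be a finite simple graph and k ≥ 1. Define Boolean variables x^{i,u}_{j,v} for each ordered pair ((i,u),(j,v)) with {(i,u),(j,v)} ∈ CONF, let D = ⋁_{{(i,u),(j,v)} ∈ CONF} (x^{i,u}_{j,v} ∧ x^{j,v}_{i,u}), and let Ψ = ⋀_{i=1}^{k} ⋁_{u ∈ V} ⋀_{(j,v) : {(i,u),(j,v)} ∈ CONF} x^{i,u}_{j,v}. Then Alice and Bob have a winning strategy in the Alice-Bob-Merlin game if and only if there is an assignment of the variables making Ψ true and D false (i.e., Ψ → D is not a tautology). -/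
/-- Alice and Bob have a winning strategy in the Alice–Bob–Merlin game on `G`
with `k` cells iff there is an assignment `a` of the variables `x^{i,u}_{j,v}`
(indexed by ordered pairs of legal cell–vertex pairs) making
`Ψ = ⋀ i ⋁ u ⋀ (j,v) x^{i,u}_{j,v}` true and
`D = ⋁ (x^{i,u}_{j,v} ∧ x^{j,v}_{i,u})` false. -/
theorem stmt_14 {V : Type} [Fintype V] [DecidableEq V] (G : SimpleGraph V) (k : ℕ) :
    (∃ (SA : Fin k → V) (SB : Sym2 (Fin k × V) → Fin k),
        ∀ (i : Fin k) (SM1 : V → Fin k) (SM2 : V → V),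
          (∀ u, SM1 u ≠ i) → (∀ u, ¬ G.Adj u (SM2 u)) →
          SB s((i, SA i), (SM1 (SA i), SM2 (SA i))) = i) ↔
      (∃ a : (Fin k × V) → (Fin k × V) → Bool,
        (∀ i : Fin k, ∃ u : V, ∀ (j : Fin k) (v : V),
            i ≠ j → ¬ G.Adj u v → a (i, u) (j, v) = true) ∧
        ¬ ∃ (i : Fin k) (u : V) (j : Fin k) (v : V),
            i ≠ j ∧ ¬ G.Adj u v ∧ a (i, u) (j, v) = true ∧ a (j, v) (i, u) = true) := by
  classical
  constructor
  · rintro ⟨SA, SB, h⟩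
    refine ⟨fun p q => decide (SB s(p, q) = p.1), ?_, ?_⟩
    · intro i
      refine ⟨SA i, fun j v hij hadj => ?_⟩
      have key := h i (fun _ => j) (fun u => if G.Adj u v then u else v)
        (fun u => hij.symm) ?_
      · simp only [if_neg hadj] at key
        simpa using key
      · intro u
        by_cases hu : G.Adj u v
        · simpa [hu] using G.irrefl
        · simpa [hu] using hu
    · rintro ⟨i, u, j, v, hij, hadj, h1, h2⟩
      simp only [decide_eq_true_eq] at h1 h2
      rw [Sym2.eq_swap] at h2
      exact hij (h1.symm.trans h2)
  · rintro ⟨a, hΨ, hD⟩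
    choose SA hSA using hΨ
    refine ⟨SA, Sym2.lift ⟨fun p q =>
      if a p q && !(a q p) then p.1
      else if a q p && !(a p q) then q.1
      else min p.1 q.1, ?_⟩, ?_⟩
    · intro p q
      cases hpq : a p q <;> cases hqp : a q p <;> simp [hpq, hqp, min_comm]
    · intro i SM1 SM2 hne hadj
      set j := SM1 (SA i)
      set v := SM2 (SA i)
      have h1 : a (i, SA i) (j, v) = true :=
        hSA i j v (hne (SA i)).symm (hadj (SA i))
      have h2 : a (j, v) (i, SA i) = false := by
        cases hb : a (j, v) (i, SA i)
        · rfl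
        · exact absurd ⟨i, SA i, j, v, (hne (SA i)).symm, hadj (SA i), h1, hb⟩ hD
      simp [Sym2.lift_mk, h1, h2]
end

section
/- Deciding whether Ψ → D_n is a tautology, where D_n = x_1∧y_1 ∨ ... ∨ x_n∧y_n and Ψ is an ∧-∨-∧ depth-3 read-once monotone Boolean formula over x_1,y_1,...,x_n,y_n, is coNP-hard: there is a polynomial-time many-one reduction from the complement of the k-clique problem to this problem. -/
/-- Correctness of the polynomial-time reduction from the complement of the
`k`-clique problem (hence coNP-hardness of tautology checking for `Ψ → D_n`):
for every finite simple graph `G` and every `k`, `G` has no `k`-clique iff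
`Ψ → D_n` is a tautology, where the variables `x^{i,u}_{j,v}` are indexed by
ordered pairs of legal cell–vertex pairs, `D_n = ⋁ (x^{i,u}_{j,v} ∧ x^{j,v}_{i,u})`
and `Ψ = ⋀ i ⋁ u ⋀ (j,v) x^{i,u}_{j,v}` is an ∧-∨-∧ depth-3 read-once monotone
formula. -/
theorem stmt_15 {V : Type} [Fintype V] [DecidableEq V] (G : SimpleGraph V) (k : ℕ) :
    (¬ ∃ w : Fin k → V, ∀ i j, i ≠ j → G.Adj (w i) (w j)) ↔
      (∀ a : (Fin k × V) → (Fin k × V) → Bool,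
        (∀ i : Fin k, ∃ u : V, ∀ (j : Fin k) (v : V),
            i ≠ j → ¬ G.Adj u v → a (i, u) (j, v) = true) →
        ∃ (i : Fin k) (u : V) (j : Fin k) (v : V),
          i ≠ j ∧ ¬ G.Adj u v ∧ a (i, u) (j, v) = true ∧ a (j, v) (i, u) = true) := by
  constructor
  · intro hnc a ha
    choose w hw using ha
    by_contra hcon
    push_neg at hcon
    apply hnc
    refine ⟨w, fun i j hij => ?_⟩
    by_contra hadj
    have h1 := hw i j (w j) hij hadj
    have h2 := hw j i (w i) (Ne.symm hij) (fun h => hadj h.symm)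
    exact hcon i (w i) j (w j) hij hadj h1 h2
  · intro h hc
    obtain ⟨w, hw⟩ := hc
    obtain ⟨i, u, j, v, hij, hna, h1, h2⟩ :=
      h (fun p q => decide (p.2 = w p.1)) (fun i => ⟨w i, fun j v _ _ => by simp⟩)
    simp only [decide_eq_true_eq] at h1 h2
    subst h1 h2
    exact hna (hw i j hij)
end

section
/- Let C = C_1 ∧ ... ∧ C_m be a read-once monotone CNF and D = D_1 ∨ ... ∨ D_l a read-once monotone DNF over {x_1,...,x_n} with D_1 ∪ ... ∪ D_l = {x_1,...,x_n}. Suppose the function C ∨ D has a maxterm T and a right minterm S = D_j such that |S ∩ T| ≥ 2. Then there exists a clause C_u of C with C_u ⊆ T and S ∩ T ⊆ C_u; in particular there are two distinct variables p, q ∈ C_u with p, q ∈ S. -/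
/-- If `T` is a maxterm of `C ∨ D` and `S = D j` is a right minterm with
`|S ∩ T| ≥ 2`, then some clause `C u ⊆ T` satisfies `S ∩ T ⊆ C u`; in
particular `C u` contains two distinct variables of `S`. -/
theorem stmt_16 {V : Type} [Fintype V] [DecidableEq V] {m l : ℕ}
    (C : Fin m → Finset V) (D : Fin l → Finset V)
    (hCdisj : ∀ i i', i ≠ i' → Disjoint (C i) (C i'))
    (hDdisj : ∀ j j', j ≠ j' → Disjoint (D j) (D j'))
    (hDcover : Finset.univ.biUnion D = (Finset.univ : Finset V))
    (S T : Finset V) (j : Fin l) (hSright : S = D j)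
    (hSmin : IsMinterm (fun a => cnfEval C a || dnfEval D a) S)
    (hTmax : IsMaxterm (fun a => cnfEval C a || dnfEval D a) T)
    (hcard : 2 ≤ (S ∩ T).card) :
    ∃ u : Fin m, C u ⊆ T ∧ S ∩ T ⊆ C u ∧
      ∃ p ∈ C u, ∃ q ∈ C u, p ≠ q ∧ p ∈ S ∧ q ∈ S := by
  obtain ⟨hT0, hT1⟩ := hTmax
  simp only [cnfEval, dnfEval, setTo0, Bool.or_eq_false_iff, decide_eq_false_iff_not,
    decide_eq_true_eq, not_forall, not_exists, not_and, not_not] at hT0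
  obtain ⟨⟨u, hu⟩, hdnf⟩ := hT0
  -- shapes ok
  -- hu : ∀ v ∈ C u, v ∈ T ; hdnf : ∀ j', ∃ v ∈ D j', v ∈ T
  have hCuT : C u ⊆ T := fun v hv => hu v hv
  have hkey : ∀ x ∈ S ∩ T, x ∈ C u := by
    intro x hx
    have hxS := (Finset.mem_inter.mp hx).1
    have hxT := (Finset.mem_inter.mp hx).2
    have hsub : T.erase x ⊂ T := Finset.erase_ssubset hxT
    have h1 := hT1 _ hsub
    have hdnf' : dnfEval D (setTo0 (T.erase x)) = false := by
      simp only [dnfEval, setTo0, decide_eq_false_iff_not, decide_eq_true_eq, not_exists,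
        not_forall]
      intro j'
      by_cases hjj : j' = j
      · subst hjj
        obtain ⟨y, hy, hyx⟩ := Finset.exists_mem_ne (s := S ∩ T) (by omega) x
        have hyS := (Finset.mem_inter.mp hy).1
        have hyT := (Finset.mem_inter.mp hy).2
        exact ⟨y, hSright ▸ hyS, by simp [Finset.mem_erase, hyx, hyT]⟩
      · obtain ⟨v, hv, hvT⟩ := hdnf j'
        have hvx : v ≠ x := by
          intro h
          subst h
          exact (Finset.disjoint_left.mp (hDdisj j' j hjj) hv) (hSright ▸ hxS)
        exact ⟨v, hv, by simp [Finset.mem_erase, hvx, hvT]⟩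
    have hcnf : cnfEval C (setTo0 (T.erase x)) = true := by
      cases hc : cnfEval C (setTo0 (T.erase x))
      · simp only [hc, hdnf', Bool.or_self] at h1; exact h1
      · rfl
    simp only [cnfEval, setTo0, decide_eq_true_eq] at hcnf
    obtain ⟨v, hv, hvx⟩ := hcnf u
    have : v = x := by
      have hvT := hu v hv
      by_contra hne
      exact hvx (Finset.mem_erase.mpr ⟨hne, hvT⟩)
    exact this ▸ hv
  obtain ⟨p, hp, q, hq, hpq⟩ := Finset.one_lt_card.mp (by omega : 1 < (S ∩ T).card)
  exact ⟨u, hCuT, hkey, p, hkey p hp, q, hkey q hq, hpq,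
    (Finset.mem_inter.mp hp).1, (Finset.mem_inter.mp hq).1⟩
end

section
/- Let C = C_1 ∧ ... ∧ C_m be a read-once monotone CNF and D = D_1 ∨ ... ∨ D_l a read-once monotone DNF over {x_1,...,x_n} with D_1 ∪ ... ∪ D_l = {x_1,...,x_n}. Let T be a maxterm of C ∨ D containing a clause C_u, and let S be a left minterm of C ∨ D (a minterm with |S ∩ C_i| = 1 for all i and S ⊆ C_1 ∪ ... ∪ C_m). Suppose p ∈ S ∩ T with p ∉ C_u, and let D_v be the unique conjunction with p ∈ D_v. Then C_u ∩ D_v = ∅. -/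
/-- If `T` is a maxterm of `C ∨ D` containing the clause `C u`, `S` is a left
minterm, `p ∈ S ∩ T` with `p ∉ C u`, and `D v` is the conjunction containing
`p`, then `C u` and `D v` are disjoint. -/
theorem stmt_17 {V : Type} [Fintype V] [DecidableEq V] {m l : ℕ}
    (C : Fin m → Finset V) (D : Fin l → Finset V)
    (hCdisj : ∀ i i', i ≠ i' → Disjoint (C i) (C i'))
    (hDdisj : ∀ j j', j ≠ j' → Disjoint (D j) (D j'))
    (hDcover : Finset.univ.biUnion D = (Finset.univ : Finset V))
    (T : Finset V) (u : Fin m)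
    (hTmax : IsMaxterm (fun a => cnfEval C a || dnfEval D a) T)
    (hCuT : C u ⊆ T)
    (S : Finset V)
    (hSmin : IsMinterm (fun a => cnfEval C a || dnfEval D a) S)
    (hSsub : S ⊆ Finset.univ.biUnion C) (hSleft : ∀ i, (S ∩ C i).card = 1)
    (p : V) (hpS : p ∈ S) (hpT : p ∈ T) (hpCu : p ∉ C u)
    (v : Fin l) (hpDv : p ∈ D v) :
    Disjoint (C u) (D v) := by
  rw [Finset.disjoint_left]
  intro y hyCu hyDv
  -- From maxtermness: f(T→0)=0 gives: cnf false and dnf false at setTo0 T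
  obtain ⟨hT0, hTmaxl⟩ := hTmax
  simp only [Bool.or_eq_false_iff] at hT0
  obtain ⟨-, hdnfT⟩ := hT0
  -- every D j meets T
  have hmeet : ∀ j : Fin l, ∃ w ∈ D j, w ∈ T := by
    intro j
    by_contra h
    push_neg at h
    have : dnfEval D (setTo0 T) = true := by
      simp only [dnfEval, decide_eq_true_eq]
      exact ⟨j, fun w hw => by simp [setTo0, h w hw]⟩
    rw [this] at hdnfT; exact absurd hdnfT (by simp)
  -- consider T' = T \ {p}
  have hT'lt : T \ {p} ⊂ T := Finset.sdiff_ssubset (by simpa using hpT) (by simp)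
  have h1 := hTmaxl _ hT'lt
  simp only [Bool.or_eq_true] at h1
  have hyT : y ∈ T := hCuT hyCu
  have hyp : y ≠ p := fun h => hpCu (h ▸ hyCu)
  -- cnf false at setTo0 (T \ {p})
  have hcnf : cnfEval C (setTo0 (T \ {p})) = false := by
    simp only [cnfEval, decide_eq_false_iff_not]
    intro h
    obtain ⟨w, hwCu, hw⟩ := h u
    simp only [setTo0, decide_eq_true_eq, Finset.mem_sdiff, Finset.mem_singleton] at hw
    exact hw ⟨hCuT hwCu, fun he => hpCu (he ▸ hwCu)⟩
  -- dnf false at setTo0 (T \ {p})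
  have hdnf : dnfEval D (setTo0 (T \ {p})) = false := by
    simp only [dnfEval, decide_eq_false_iff_not]
    rintro ⟨j, hj⟩
    by_cases hjv : j = v
    · subst hjv
      have := hj y hyDv
      simp only [setTo0, decide_eq_true_eq, Finset.mem_sdiff, Finset.mem_singleton] at this
      exact this ⟨hyT, hyp⟩
    · obtain ⟨w, hwDj, hwT⟩ := hmeet j
      have hwp : w ≠ p := fun he => (hDdisj j v hjv).forall_ne_finset hwDj hpDv (he ▸ rfl)
      have := hj w hwDj
      simp only [setTo0, decide_eq_true_eq, Finset.mem_sdiff, Finset.mem_singleton] at this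
      exact this ⟨hwT, hwp⟩
  rw [hcnf, hdnf] at h1
  simp at h1
end

section
/- Let C = C_1 ∧ ... ∧ C_m be a read-once monotone CNF over variables {x_1,...,x_n} and D = D_1 ∨ ... ∨ D_l a read-once monotone DNF with D_1 ∪ ... ∪ D_l = {x_1,...,x_n}. Suppose C → D is not a tautology. Then there exists a left minterm of C ∨ D, i.e., a minterm S of C ∨ D such that S ⊆ C_1 ∪ ... ∪ C_m and |S ∩ C_i| = 1 for every i ∈ {1,...,m}. -/
/-- If `C → D` is not a tautology, then `C ∨ D` has a left minterm: a minterm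
`S ⊆ C_1 ∪ … ∪ C_m` with `|S ∩ C_i| = 1` for every `i`. -/
theorem stmt_18 {V : Type} [Fintype V] [DecidableEq V] {m l : ℕ}
    (C : Fin m → Finset V) (D : Fin l → Finset V)
    (hCdisj : ∀ i i', i ≠ i' → Disjoint (C i) (C i'))
    (hDdisj : ∀ j j', j ≠ j' → Disjoint (D j) (D j'))
    (hDcover : Finset.univ.biUnion D = (Finset.univ : Finset V))
    (hnotaut : ∃ a : V → Bool, cnfEval C a = true ∧ dnfEval D a = false) :
    ∃ S : Finset V,
      IsMinterm (fun a => cnfEval C a || dnfEval D a) S ∧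
      S ⊆ Finset.univ.biUnion C ∧ ∀ i, (S ∩ C i).card = 1 := by

  classical
  obtain ⟨a, hc, hd⟩ := hnotaut
  -- monotonicity of dnf
  have dnf_mono : ∀ {S' S : Finset V}, S' ⊆ S → dnfEval D (setTo1 S) = false →
      dnfEval D (setTo1 S') = false := by
    intro S' S hsub hS
    by_contra h
    have h' : dnfEval D (setTo1 S') = true := by
      cases hh : dnfEval D (setTo1 S') <;> simp_all
    simp only [dnfEval, decide_eq_true_eq, setTo1, decide_eq_true_eq] at h' hS ⊢
    rw [decide_eq_false_iff_not] at hS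
    obtain ⟨j, hj⟩ := h'
    exact hS ⟨j, fun v hv => by simpa using hsub (by simpa using hj v hv)⟩
  -- nonemptiness of the family of sets with cnf=1, dnf=0
  have ha : setTo1 (Finset.univ.filter (fun v => a v = true)) = a := by
    funext v; simp only [setTo1, Finset.mem_filter, Finset.mem_univ, true_and]
    cases a v <;> simp
  have hne : ((Finset.univ : Finset (Finset V)).filter
      (fun S => cnfEval C (setTo1 S) = true ∧ dnfEval D (setTo1 S) = false)).Nonempty :=
    ⟨_, by simp only [Finset.mem_filter, Finset.mem_univ, true_and]; rw [ha]; exact ⟨hc, hd⟩⟩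
  obtain ⟨S, hSmem, hSmin⟩ := Finset.exists_min_image _ Finset.card hne
  simp only [Finset.mem_filter, Finset.mem_univ, true_and] at hSmem
  obtain ⟨hScnf, hSdnf⟩ := hSmem
  have hcnf' : ∀ i, ∃ v ∈ C i, v ∈ S := by
    have := hScnf
    simp only [cnfEval, decide_eq_true_eq, setTo1, decide_eq_true_eq] at this
    exact this
  -- minimality: no proper subset has cnf = true
  have hmin : ∀ S' ⊂ S, cnfEval C (setTo1 S') = false := by
    intro S' hlt
    by_contra h
    have hcS' : cnfEval C (setTo1 S') = true := by
      cases hh : cnfEval C (setTo1 S') <;> simp_all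
    have hdS' : dnfEval D (setTo1 S') = false := dnf_mono hlt.subset hSdnf
    have hle := hSmin S' (by
      simp only [Finset.mem_filter, Finset.mem_univ, true_and]
      exact ⟨hcS', hdS'⟩)
    exact absurd hle (Finset.card_lt_card hlt).not_ge
  -- helper: removing a removable element contradicts minimality
  have herase : ∀ v ∈ S, (∀ i, ∃ w ∈ C i, w ∈ S.erase v) → False := by
    intro v hv hAll
    have hsub : S.erase v ⊂ S := Finset.erase_ssubset hv
    have : cnfEval C (setTo1 (S.erase v)) = true := by
      simp only [cnfEval, decide_eq_true_eq, setTo1, decide_eq_true_eq]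
      exact hAll
    rw [hmin _ hsub] at this
    exact Bool.false_ne_true this
  refine ⟨S, ⟨?_, ?_⟩, ?_, ?_⟩
  · simp [hScnf]
  · intro S' hlt
    simp [hmin S' hlt, dnf_mono hlt.subset hSdnf]
  · intro v hv
    simp only [Finset.mem_biUnion, Finset.mem_univ, true_and]
    by_contra hnv
    push_neg at hnv
    refine herase v hv (fun i => ?_)
    obtain ⟨w, hwC, hwS⟩ := hcnf' i
    exact ⟨w, hwC, Finset.mem_erase.mpr ⟨fun h => hnv i (h ▸ hwC), hwS⟩⟩
  · intro i
    obtain ⟨w, hwC, hwS⟩ := hcnf' i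
    have h1 : 1 ≤ (S ∩ C i).card :=
      Finset.card_pos.mpr ⟨w, Finset.mem_inter.mpr ⟨hwS, hwC⟩⟩
    have h2 : (S ∩ C i).card ≤ 1 := by
      by_contra h
      push_neg at h
      obtain ⟨u, hu, v, hv, huv⟩ := Finset.one_lt_card.mp h
      obtain ⟨huS, huC⟩ := Finset.mem_inter.mp hu
      obtain ⟨hvS, hvC⟩ := Finset.mem_inter.mp hv
      refine herase v hvS (fun i' => ?_)
      by_cases hii : i' = i
      · subst hii
        exact ⟨u, huC, Finset.mem_erase.mpr ⟨huv, huS⟩⟩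
      · obtain ⟨x, hxC, hxS⟩ := hcnf' i'
        refine ⟨x, hxC, Finset.mem_erase.mpr ⟨fun h => ?_, hxS⟩⟩
        subst h
        exact Finset.disjoint_left.mp (hCdisj i' i hii) hxC hvC
    omega
end
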